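/- Let T be a normal operator on a Hilbert space H, A = (I + T*T)⁻¹, B = TA. Then B is a bounded normal operator: B*B = BB*. -/
import Mathlib


open LinearPMap
open scoped LinearPMap InnerProduct

variable {H : Type*} [NormedAddCommGroup H] [InnerProductSpace ℂ H] [CompleteSpace H]

/-- The natural domain of the composition `g ∘ f`: `{x ∈ dom f : f x ∈ dom g}`. -/
def pcompDomain (g f : H →ₗ.[ℂ] H) : Submodule ℂ H where
  carrier := {x | ∃ hx : x ∈ f.domain, f ⟨x, hx⟩ ∈ g.domain}
  add_mem' := by
    rintro a b ⟨ha, ha'⟩ ⟨hb, hb'⟩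
    refine ⟨add_mem ha hb, ?_⟩
    have h : f ⟨a + b, add_mem ha hb⟩ = f ⟨a, ha⟩ + f ⟨b, hb⟩ := f.map_add ⟨a, ha⟩ ⟨b, hb⟩
    rw [h]; exact add_mem ha' hb'
  zero_mem' := ⟨zero_mem _, by
    have h : f ⟨0, zero_mem _⟩ = 0 := f.map_zero
    rw [h]; exact zero_mem _⟩
  smul_mem' := by
    rintro c a ⟨ha, ha'⟩
    refine ⟨Submodule.smul_mem _ c ha, ?_⟩
    have h : f ⟨c • a, Submodule.smul_mem _ c ha⟩ = c • f ⟨a, ha⟩ := f.map_smul c ⟨a, ha⟩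
    rw [h]; exact Submodule.smul_mem _ c ha'

/-- Composition `g ∘ f` of unbounded operators, with its natural domain
`{x ∈ dom f : f x ∈ dom g}`. -/
noncomputable def pcomp (g f : H →ₗ.[ℂ] H) : H →ₗ.[ℂ] H :=
  g.comp (f.domRestrict (pcompDomain g f)) (by
    rintro ⟨x, hx⟩
    obtain ⟨h1, h2⟩ := hx.1
    have : f.domRestrict (pcompDomain g f) ⟨x, hx⟩ = f ⟨x, h1⟩ :=
      LinearPMap.domRestrict_apply rfl
    rw [this]; exact h2)

/-- The identity as an unbounded operator. -/
noncomputable def pid : H →ₗ.[ℂ] H := LinearMap.id.toPMap ⊤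

noncomputable example (T : H →ₗ.[ℂ] H) : H →ₗ.[ℂ] H := pid + pcomp T† T

/-- Applying equal partial linear maps to the same point gives the same value. -/
lemma papply_congr {f g : H →ₗ.[ℂ] H} (h : f = g) {x : H} (hx : x ∈ f.domain)
    (hx' : x ∈ g.domain) : f ⟨x, hx⟩ = g ⟨x, hx'⟩ := by subst h; rfl

/-- Congruence for application of a partial linear map. -/
lemma pmapply_congr (g : H →ₗ.[ℂ] H) {a b : H} (ha : a ∈ g.domain) (hb : b ∈ g.domain)
    (h : a = b) : g ⟨a, ha⟩ = g ⟨b, hb⟩ := by subst h; rfl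

lemma pcomp_mem (g f : H →ₗ.[ℂ] H) {x : H} (hx : x ∈ (pcomp g f).domain) :
    ∃ h : x ∈ f.domain, f ⟨x, h⟩ ∈ g.domain :=
  (Submodule.mem_inf.mp hx).1

lemma pcomp_apply' (g f : H →ₗ.[ℂ] H) {x : H} (hx : x ∈ (pcomp g f).domain)
    (h1 : x ∈ f.domain) (h2 : f ⟨x, h1⟩ ∈ g.domain) :
    pcomp g f ⟨x, hx⟩ = g ⟨f ⟨x, h1⟩, h2⟩ := by
  show g ⟨f.domRestrict (pcompDomain g f) ⟨x, hx⟩, _⟩ = g ⟨f ⟨x, h1⟩, h2⟩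
  exact pmapply_congr g _ _ (LinearPMap.domRestrict_apply rfl)

theorem stmt8 (T : H →ₗ.[ℂ] H) (hclosed : T.IsClosed) (hdense : Dense (T.domain : Set H))
    (hnormal : pcomp T† T = pcomp T T†)
    (S : H →ₗ.[ℂ] H) (hS : S = pid + pcomp T† T) (A B : H →L[ℂ] H)
    (hA₁ : ∀ x : S.domain, A (S x) = (x : H))
    (hA₂ : ∀ y : H, ∃ h : A y ∈ S.domain, S ⟨A y, h⟩ = y)
    (hB : ∀ x : H, ∃ h : A x ∈ T.domain, T ⟨A x, h⟩ = B x) :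
    ContinuousLinearMap.adjoint B ∘L B = B ∘L ContinuousLinearMap.adjoint B := by
  subst hS
  have adj := LinearPMap.adjoint_isFormalAdjoint hdense
  -- domain facts
  have hdom : ∀ x : H, A x ∈ (pcomp T.adjoint T).domain := by
    intro x
    obtain ⟨h, -⟩ := hA₂ x
    exact (Submodule.mem_inf.mp h).2
  have hdom' : ∀ x : H, A x ∈ (pcomp T T.adjoint).domain := fun x => hnormal ▸ hdom x
  have h1 : ∀ x : H, A x ∈ T.domain := fun x => (pcomp_mem _ _ (hdom x)).choose
  have h2 : ∀ x : H, T ⟨A x, h1 x⟩ ∈ T.adjoint.domain := fun x => (pcomp_mem _ _ (hdom x)).choose_spec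
  have h3 : ∀ x : H, A x ∈ T.adjoint.domain := fun x => (pcomp_mem _ _ (hdom' x)).choose
  have h4 : ∀ x : H, T.adjoint ⟨A x, h3 x⟩ ∈ T.domain := fun x => (pcomp_mem _ _ (hdom' x)).choose_spec
  have hBval : ∀ x : H, T ⟨A x, h1 x⟩ = B x := fun x => (hB x).choose_spec
  -- normality pointwise
  have key1 : ∀ x : H, T.adjoint ⟨T ⟨A x, h1 x⟩, h2 x⟩ = T ⟨T.adjoint ⟨A x, h3 x⟩, h4 x⟩ := by
    intro x
    calc T.adjoint ⟨T ⟨A x, h1 x⟩, h2 x⟩ = pcomp T.adjoint T ⟨A x, hdom x⟩ :=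
          (pcomp_apply' _ _ (hdom x) (h1 x) (h2 x)).symm
      _ = pcomp T T.adjoint ⟨A x, hdom' x⟩ := papply_congr hnormal _ _
      _ = T ⟨T.adjoint ⟨A x, h3 x⟩, h4 x⟩ := pcomp_apply' _ _ (hdom' x) (h3 x) (h4 x)
  -- decomposition x = A x + T.adjoint T (A x)
  have key2 : ∀ x : H, A x + T.adjoint ⟨T ⟨A x, h1 x⟩, h2 x⟩ = x := by
    intro x
    obtain ⟨h, hSx⟩ := hA₂ x
    have := LinearPMap.add_apply pid (pcomp T.adjoint T) ⟨A x, h⟩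
    rw [this] at hSx
    have hpid : pid ⟨A x, (Submodule.mem_inf.mp h).1⟩ = A x := rfl
    rw [hpid, pcomp_apply' _ _ ((Submodule.mem_inf.mp h).2) (h1 x) (h2 x)] at hSx
    exact hSx
  set Bs := ContinuousLinearMap.adjoint B with hBs
  -- B* x = T.adjoint (A x)
  have step1 : ∀ x : H, Bs x = T.adjoint ⟨A x, h3 x⟩ := by
    intro x
    refine ext_inner_right ℂ fun y => ?_
    rw [hBs, ContinuousLinearMap.adjoint_inner_left]
    -- goal: ⟪x, B y⟫ = ⟪T.adjoint ⟨A x, h3 x⟩, y⟫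
    have hy := key2 y
    calc inner (𝕜 := ℂ) x (B y)
        = inner (𝕜 := ℂ) (A x + T.adjoint ⟨T ⟨A x, h1 x⟩, h2 x⟩) (B y) := by rw [key2 x]
      _ = inner (𝕜 := ℂ) (A x) (B y) + inner (𝕜 := ℂ) (T.adjoint ⟨T ⟨A x, h1 x⟩, h2 x⟩ : H) (B y) := by
          rw [inner_add_left]
      _ = inner (𝕜 := ℂ) (T.adjoint ⟨A x, h3 x⟩ : H) (A y)
          + inner (𝕜 := ℂ) (T.adjoint ⟨A x, h3 x⟩ : H) (T.adjoint ⟨T ⟨A y, h1 y⟩, h2 y⟩ : H) := by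
          congr 1
          · rw [← hBval y]
            exact (adj ⟨A x, h3 x⟩ ⟨A y, h1 y⟩).symm
          · have c1 : inner (𝕜 := ℂ) (T.adjoint ⟨T ⟨A y, h1 y⟩, h2 y⟩ : H)
                (T.adjoint ⟨A x, h3 x⟩ : H)
                = inner (𝕜 := ℂ) (T ⟨A y, h1 y⟩ : H) (T ⟨T.adjoint ⟨A x, h3 x⟩, h4 x⟩ : H) :=
              adj ⟨T ⟨A y, h1 y⟩, h2 y⟩ ⟨_, h4 x⟩
            rw [← hBval y]
            conv_rhs => rw [← inner_conj_symm, c1, inner_conj_symm]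
            rw [key1 x]
      _ = inner (𝕜 := ℂ) (T.adjoint ⟨A x, h3 x⟩ : H) (A y + T.adjoint ⟨T ⟨A y, h1 y⟩, h2 y⟩) := by
          rw [inner_add_right]
      _ = inner (𝕜 := ℂ) (T.adjoint ⟨A x, h3 x⟩ : H) y := by rw [hy]
  -- the central identity
  have step2 : ∀ x y : H, inner (𝕜 := ℂ) (B x) (B y) = inner (𝕜 := ℂ) (Bs x) (Bs y) := by
    intro x y
    rw [step1 x, step1 y]
    calc inner (𝕜 := ℂ) (B x) (B y)
        = inner (𝕜 := ℂ) (T.adjoint ⟨T ⟨A x, h1 x⟩, h2 x⟩ : H) (A y) := by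
          rw [← hBval x, ← hBval y]
          exact (adj ⟨T ⟨A x, h1 x⟩, h2 x⟩ ⟨A y, h1 y⟩).symm
      _ = inner (𝕜 := ℂ) (T ⟨T.adjoint ⟨A x, h3 x⟩, h4 x⟩ : H) (A y) := by rw [key1 x]
      _ = inner (𝕜 := ℂ) (T.adjoint ⟨A x, h3 x⟩ : H) (T.adjoint ⟨A y, h3 y⟩ : H) := by
          rw [← inner_conj_symm, ← adj ⟨A y, h3 y⟩ ⟨(T.adjoint ⟨A x, h3 x⟩ : H), h4 x⟩,
            inner_conj_symm]
  have hBB : B = ContinuousLinearMap.adjoint Bs := (ContinuousLinearMap.adjoint_adjoint B).symm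
  ext x
  refine ext_inner_left ℂ fun v => ?_
  have lhs : inner (𝕜 := ℂ) v ((Bs ∘L B) x) = inner (𝕜 := ℂ) (B v) (B x) := by
    show inner (𝕜 := ℂ) v (Bs (B x)) = _
    rw [hBs, ContinuousLinearMap.adjoint_inner_right]
  have rhs : inner (𝕜 := ℂ) v ((B ∘L Bs) x) = inner (𝕜 := ℂ) (Bs v) (Bs x) := by
    show inner (𝕜 := ℂ) v (B (Bs x)) = _
    rw [hBB, ContinuousLinearMap.adjoint_inner_right]
  rw [lhs, rhs, step2]
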